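/- For any t > 0 and nonnegative integers l, r, the double integral ∫₀ᵗ ∫₀^∞ ((x(t-s)/2)^{l+r}/(l!·r!))·e^{-x(t-s)}·(3s³/(2t³))·e^{-sx/2} dx ds equals 3·C(l+r, l)·∫₀¹ (1-a)³·aˡ⁺ʳ/(1+a)^{l+r+1} da. -/

import Mathlib

/-! For a fixed birth time `s`, the two exponentials merge into `exp (-(t - s/2) x)`, so the inner
integral is a Gamma integral equal to `(l+r)! / (t - s/2)^(l+r+1)`, and `(l+r)!/(l! r!)` is the
binomial coefficient. The remaining integrand in `s` is homogeneous of degree `-1` in `(s, t)`, so the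
substitution `a = 1 - s/t` removes `t`. -/

open MeasureTheory Set Real
open scoped Nat

lemma integral_pow_mul_exp_neg_mul_Ioi (n : ℕ) {c : ℝ} (hc : 0 < c) :
    ∫ x in Ioi (0 : ℝ), x ^ n * exp (-(c * x)) = n ! / c ^ (n + 1) := by
  have key := integral_rpow_mul_exp_neg_mul_Ioi (a := (n : ℝ) + 1) (by positivity) hc
  simp_rw [add_sub_cancel_right, rpow_natCast, Gamma_nat_eq_factorial, one_div,
    inv_rpow hc.le] at key
  rw [key, div_eq_inv_mul]
  norm_cast

lemma integral_Ioi_poisson_mul_length_birth_density {t s : ℝ} (ht : t ≠ 0) (hs : s < 2 * t)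
    (l r : ℕ) :
    ∫ x in Ioi (0 : ℝ), ((x * (t - s) / 2) ^ (l + r) / ((l ! : ℝ) * (r ! : ℝ))) *
        exp (-(x * (t - s))) * (3 * s ^ 3 / (2 * t ^ 3)) * exp (-(s * x / 2))
      = 3 * ((l + r).choose l : ℝ) *
          (s ^ 3 * (t - s) ^ (l + r) / (t ^ 3 * (2 * t - s) ^ (l + r + 1))) := by
  have integrand_eq : ∀ x : ℝ, ((x * (t - s) / 2) ^ (l + r) / ((l ! : ℝ) * (r ! : ℝ))) *
        exp (-(x * (t - s))) * (3 * s ^ 3 / (2 * t ^ 3)) * exp (-(s * x / 2))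
      = ((t - s) / 2) ^ (l + r) / ((l ! : ℝ) * (r ! : ℝ)) * (3 * s ^ 3 / (2 * t ^ 3)) *
          (x ^ (l + r) * exp (-((t - s / 2) * x))) := by
    intro x
    rw [show -((t - s / 2) * x) = -(x * (t - s)) + -(s * x / 2) by ring, exp_add, mul_div_assoc,
      mul_pow]
    ring
  have hfact : ((l + r) ! : ℝ) = (l + r).choose l * l ! * r ! := by
    exact_mod_cast (Nat.choose_symm_add ▸ Nat.add_choose_mul_factorial_mul_factorial l r).symm
  simp_rw [integrand_eq]
  rw [integral_const_mul, integral_pow_mul_exp_neg_mul_Ioi _ (by linarith), hfact,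
    show t - s / 2 = (2 * t - s) / 2 by ring, div_pow, div_pow]
  have h2ts : 2 * t - s ≠ 0 := by linarith
  field_simp
  ring

lemma integral_birth_profile_rescale {t : ℝ} (ht : 0 < t) (n : ℕ) :
    ∫ s in (0 : ℝ)..t, s ^ 3 * (t - s) ^ n / (t ^ 3 * (2 * t - s) ^ (n + 1))
      = ∫ a in (0 : ℝ)..1, (1 - a) ^ 3 * a ^ n / (1 + a) ^ (n + 1) := by
  have hpt : ∀ s ∈ uIcc 0 t, s ^ 3 * (t - s) ^ n / (t ^ 3 * (2 * t - s) ^ (n + 1))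
      = t⁻¹ * ((1 - (1 - s / t)) ^ 3 * (1 - s / t) ^ n / (1 + (1 - s / t)) ^ (n + 1)) := by
    intro s hs
    rw [uIcc_of_le ht.le] at hs
    have : 2 * t - s ≠ 0 := by linarith [hs.2]
    rw [sub_sub_cancel, one_sub_div ht.ne', show 1 + (t - s) / t = (2 * t - s) / t by
      field_simp; ring, div_pow, div_pow, div_pow]
    field_simp
    ring
  rw [intervalIntegral.integral_congr hpt, intervalIntegral.integral_const_mul,
    intervalIntegral.integral_comp_sub_div (fun a => (1 - a) ^ 3 * a ^ n / (1 + a) ^ (n + 1)) ht.ne']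
  simp [ht.ne']

theorem stit_pLR_integral_formula (t : ℝ) (ht : 0 < t) (l r : ℕ) :
    (∫ s in (0:ℝ)..t, ∫ x in Set.Ioi (0:ℝ),
        ((x * (t - s) / 2)^(l + r) / ((Nat.factorial l : ℝ) * (Nat.factorial r : ℝ))) *
          Real.exp (-(x * (t - s))) * (3 * s^3 / (2 * t^3)) * Real.exp (-(s * x / 2)))
      = 3 * (Nat.choose (l + r) l : ℝ) *
          ∫ a in (0:ℝ)..1, (1 - a)^3 * a^(l + r) / (1 + a)^(l + r + 1) := by
  refine (intervalIntegral.integral_congr fun s hs =>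
    integral_Ioi_poisson_mul_length_birth_density ht.ne'
      (by linarith [(uIcc_of_le ht.le ▸ hs).2]) l r).trans ?_
  rw [intervalIntegral.integral_const_mul, integral_birth_profile_rescale ht]
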